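/- arXiv:math/0410264 — 9 statements merged into one kernel-verified Lean document; each statement's English description precedes it below -/
import Mathlib

section
/- Let M be an m×n integer matrix and N an l×n integer matrix whose columns b_1,...,b_n span Q^l as a Q-vector space. If every ideal of K[x_1,...,x_n] that is homogeneous with respect to the multigrading deg(x_i) = b_i is also homogeneous with respect to the multigrading deg(x_i) = a_i (the columns of M), then there exists a Q-linear map π: Q^l → Q^m with π(b_i) = a_i for all i = 1,...,n. -/
open MvPolynomial

/-- The multidegree of a monomial exponent `e` with respect to the multigrading
given by the columns of the integer matrix `M` (column `i` is the degree of `xᵢ`). -/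
def mdeg {m n : ℕ} (M : Matrix (Fin m) (Fin n) ℤ) (e : Fin n →₀ ℕ) : Fin m → ℤ :=
  fun j => ∑ i, (e i : ℤ) * M j i

/-- A polynomial is homogeneous for the multigrading given by the columns of `M`
if all monomials in its support have the same multidegree. -/
def IsMHomog {m n : ℕ} (K : Type*) [Field K] (M : Matrix (Fin m) (Fin n) ℤ)
    (f : MvPolynomial (Fin n) K) : Prop :=
  ∀ e ∈ f.support, ∀ e' ∈ f.support, mdeg M e = mdeg M e'

/-- An ideal is homogeneous for the multigrading given by the columns of `M`
if it is generated by homogeneous polynomials. -/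
def IsMHomogIdeal {m n : ℕ} (K : Type*) [Field K] (M : Matrix (Fin m) (Fin n) ℤ)
    (I : Ideal (MvPolynomial (Fin n) K)) : Prop :=
  ∃ S : Set (MvPolynomial (Fin n) K), (∀ f ∈ S, IsMHomog K M f) ∧ I = Ideal.span S


/-!
If `mdeg N e = mdeg N e'` but `mdeg M e ≠ mdeg M e'`, the binomial `f = x^e - x^e'` is
`N`-homogeneous, so `(f)` is `M`-homogeneous and contains the `M`-component `x^e` of `f`;
but `f` vanishes at `(1, …, 1)` and `x^e` does not. Writing an integer vector `c` as
`c⁺ - c⁻`, this says that the integer kernel of `N` lies in that of `M`. Clearing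
denominators, the same holds over `ℚ`, and as the columns of `N` span `ℚ^l`, `M` factors
through `N`.
-/

open Finsupp Matrix

theorem LinearMap.exists_comp_eq_of_surjective_of_ker_le {R V W U : Type*} [Ring R]
    [AddCommGroup V] [Module R V] [AddCommGroup W] [Module R W] [AddCommGroup U] [Module R U]
    {f : V →ₗ[R] W} (hf : Function.Surjective f) {g : V →ₗ[R] U} (h : ker f ≤ ker g) :
    ∃ π : W →ₗ[R] U, π ∘ₗ f = g :=
  ⟨(ker f).liftQ g h ∘ₗ (f.quotKerEquivOfSurjective hf).symm.toLinearMap, by ext; simp⟩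

theorem Matrix.ker_mulVecLin_map_algebraMap_le {R F ι κ κ' : Type*} [CommRing R] [CommRing F]
    [Algebra R F] [IsFractionRing R F] [Fintype ι] {A : Matrix κ ι R} {B : Matrix κ' ι R}
    (h : LinearMap.ker A.mulVecLin ≤ LinearMap.ker B.mulVecLin) :
    LinearMap.ker (A.map (algebraMap R F)).mulVecLin ≤
      LinearMap.ker (B.map (algebraMap R F)).mulVecLin := by
  intro q hq
  obtain ⟨b, hb⟩ := IsLocalization.exist_integer_multiples_of_finite (nonZeroDivisors R) q
  choose c hc using hb
  have hv : algebraMap R F ∘ c = (b : R) • q := funext hc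
  rw [LinearMap.mem_ker, mulVecLin_apply] at hq ⊢
  have hAc : A *ᵥ c = 0 := by
    ext i
    apply IsFractionRing.injective R F
    rw [RingHom.map_mulVec, hv, mulVec_smul, hq]
    simp
  ext i
  have hBc := RingHom.map_mulVec (algebraMap R F) B c i
  rw [show B *ᵥ c = 0 from h hAc, hv, mulVec_smul, Pi.smul_apply, Algebra.smul_def] at hBc
  exact ((IsLocalization.map_units F b).mul_right_eq_zero).mp (by simpa using hBc.symm)

namespace MvPolynomial

attribute [local instance] weightedGradedAlgebra

variable {m n : ℕ} {K : Type*} [Field K]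

lemma weight_col (M : Matrix (Fin m) (Fin n) ℤ) (e : Fin n →₀ ℕ) :
    weight M.col e = mdeg M e := by
  ext j
  simp [weight_apply, sum_fintype, mdeg]

lemma mdeg_eq_mulVec (M : Matrix (Fin m) (Fin n) ℤ) (e : Fin n →₀ ℕ) :
    mdeg M e = M *ᵥ fun i => (e i : ℤ) := by
  ext j
  simp only [mdeg, mulVec, dotProduct, mul_comm]

lemma IsMHomog.isHomogeneousElem {M : Matrix (Fin m) (Fin n) ℤ} {f : MvPolynomial (Fin n) K}
    (hf : IsMHomog K M f) :
    SetLike.IsHomogeneousElem (weightedHomogeneousSubmodule K M.col) f := by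
  rcases f.support.eq_empty_or_nonempty with h0 | ⟨e₀, he₀⟩
  · exact ⟨0, by simp [support_eq_empty.mp h0]⟩
  refine ⟨mdeg M e₀, (mem_weightedHomogeneousSubmodule _ _ _ _).mpr fun e he => ?_⟩
  rw [weight_col]
  exact hf e (mem_support_iff.mpr he) e₀ he₀

lemma IsMHomogIdeal.isHomogeneous {M : Matrix (Fin m) (Fin n) ℤ}
    {I : Ideal (MvPolynomial (Fin n) K)} (hI : IsMHomogIdeal K M I) :
    I.IsHomogeneous (weightedHomogeneousSubmodule K M.col) := by
  obtain ⟨S, hS, rfl⟩ := hI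
  exact Ideal.homogeneous_span _ S fun f hf => (hS f hf).isHomogeneousElem

lemma IsWeightedHomogeneous.isMHomog {M : Matrix (Fin m) (Fin n) ℤ}
    {f : MvPolynomial (Fin n) K} {d : Fin m → ℤ} (hf : IsWeightedHomogeneous M.col f d) :
    IsMHomog K M f := fun e he e' he' => by
  rw [← weight_col, ← weight_col, hf (mem_support_iff.mp he), hf (mem_support_iff.mp he')]

theorem mdeg_eq_of_mdeg_eq {l : ℕ} {M : Matrix (Fin m) (Fin n) ℤ} {N : Matrix (Fin l) (Fin n) ℤ}
    (h : ∀ I : Ideal (MvPolynomial (Fin n) K), IsMHomogIdeal K N I → IsMHomogIdeal K M I)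
    {e e' : Fin n →₀ ℕ} (hN : mdeg N e = mdeg N e') : mdeg M e = mdeg M e' := by
  by_contra hM
  set f : MvPolynomial (Fin n) K := monomial e 1 - monomial e' 1
  have hf : IsMHomog K N f :=
    IsWeightedHomogeneous.isMHomog (d := mdeg N e)
      ((isWeightedHomogeneous_monomial _ _ _ (weight_col N e)).sub
        (isWeightedHomogeneous_monomial _ _ _ (by rw [weight_col, hN])))
  have hI : (Ideal.span {f}).IsHomogeneous (weightedHomogeneousSubmodule K M.col) :=
    (h _ ⟨{f}, by simpa using hf, rfl⟩).isHomogeneous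
  have hcomp : weightedHomogeneousComponent M.col (mdeg M e) f = monomial e 1 := by
    rw [map_sub, weightedHomogeneousComponent_eq_self
        (isWeightedHomogeneous_monomial _ _ _ (weight_col M e)),
      (isWeightedHomogeneous_monomial _ _ _ (weight_col M e')).weightedHomogeneousComponent_ne _ hM,
      sub_zero]
  have hmem : monomial e 1 ∈ Ideal.span {f} :=
    hcomp ▸ weightedHomogeneousComponent_mem_of_mem K M.col hI (Ideal.subset_span rfl) _
  have hker : Ideal.span {f} ≤ RingHom.ker (eval 1) := by simp [Ideal.span_le, f, eval_monomial]
  simpa [eval_monomial] using hker hmem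

theorem ker_mulVecLin_le_of_isMHomogIdeal {l : ℕ} {M : Matrix (Fin m) (Fin n) ℤ}
    {N : Matrix (Fin l) (Fin n) ℤ}
    (h : ∀ I : Ideal (MvPolynomial (Fin n) K), IsMHomogIdeal K N I → IsMHomogIdeal K M I) :
    LinearMap.ker N.mulVecLin ≤ LinearMap.ker M.mulVecLin := by
  intro c hc
  rw [LinearMap.mem_ker, mulVecLin_apply] at hc ⊢
  let e : Fin n →₀ ℕ := equivFunOnFinite.symm fun i => (c i).toNat
  let e' : Fin n →₀ ℕ := equivFunOnFinite.symm fun i => (-c i).toNat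
  have hsplit : ∀ {p : ℕ} (P : Matrix (Fin p) (Fin n) ℤ), P *ᵥ c = mdeg P e - mdeg P e' := by
    intro p P
    rw [mdeg_eq_mulVec, mdeg_eq_mulVec, ← mulVec_sub]
    congr 1
    ext i
    simp [e, e']
  rw [hsplit, sub_eq_zero] at hc ⊢
  exact mdeg_eq_of_mdeg_eq h hc

end MvPolynomial

theorem stmt2 (K : Type*) [Field K] {l m n : ℕ}
    (M : Matrix (Fin m) (Fin n) ℤ) (N : Matrix (Fin l) (Fin n) ℤ)
    (hspan : Submodule.span ℚ
      (Set.range fun i : Fin n => fun j : Fin l => (N j i : ℚ)) = ⊤)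
    (h : ∀ I : Ideal (MvPolynomial (Fin n) K),
      IsMHomogIdeal K N I → IsMHomogIdeal K M I) :
    ∃ π : (Fin l → ℚ) →ₗ[ℚ] (Fin m → ℚ),
      ∀ i : Fin n, π (fun j => (N j i : ℚ)) = fun j => (M j i : ℚ) := by
  have hsurj : Function.Surjective (N.map (algebraMap ℤ ℚ)).mulVecLin := by
    rw [← LinearMap.range_eq_top, range_mulVecLin]
    exact hspan
  obtain ⟨π, hπ⟩ := LinearMap.exists_comp_eq_of_surjective_of_ker_le hsurj
    (Matrix.ker_mulVecLin_map_algebraMap_le (ker_mulVecLin_le_of_isMHomogIdeal h))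
  refine ⟨π, fun i => ?_⟩
  simpa [mulVec_single_one, col_apply'] using LinearMap.congr_fun hπ (Pi.single i 1)
end

section
/- Let N be an l×n integer matrix with non-negative entries and columns b_1,...,b_n, let M be an m×n integer matrix with ker_Z(N) ⊆ ker_Z(M), and let φ: K[x_1,...,x_n] → K[t_1,...,t_l] be the K-algebra map with φ(x_i) = t^{b_i}. Let N(ker_Z(M)) be the lattice {u_1 b_1 + ... + u_n b_n : u ∈ ker_Z(M)} ⊆ Z^l. Then the lattice ideal I_{N(ker_Z(M))} in K[t_1,...,t_l] equals the saturation (φ(I_M)K[t_1,...,t_l]) : (t_1⋯t_l)^∞ of the extension of φ(I_M). -/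
/-!
Send a monomial `t^a` of `K[t₁, …, tₗ]` to the class of `a` in the group algebra of
`ℤˡ ⧸ L`, `L = N(ker M)`. The kernel of this map `ψ` is spanned by differences of monomials
with exponents in the same class, i.e. it is the lattice ideal `I_L`; and `ψ` turns every `tⱼ`
into a unit, so `ker ψ` is saturated with respect to `t₁⋯tₗ`. Finally `φ` sends the binomial of
`u ∈ ker M` to a monomial multiple of the binomial of `N u`, so `φ(I_M) ⊆ I_L`, and conversely
a power of `t₁⋯tₗ` times each generator of `I_L` lies in `φ(I_M)`.
-/

open MvPolynomial

/-- The integer kernel of an integer matrix. -/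
def kerZ {m n : ℕ} (M : Matrix (Fin m) (Fin n) ℤ) : Set (Fin n → ℤ) :=
  {u | M.mulVec u = 0}

/-- The binomial `t^{z₊} - t^{z₋}` associated to an integer vector `z`. -/
noncomputable def binom {n : ℕ} (K : Type*) [Field K] (u : Fin n → ℤ) :
    MvPolynomial (Fin n) K :=
  monomial (Finsupp.equivFunOnFinite.symm fun i => (u i).toNat) 1 -
    monomial (Finsupp.equivFunOnFinite.symm fun i => (-u i).toNat) 1

/-- The toric ideal of an integer matrix. -/
noncomputable def toricIdeal (K : Type*) [Field K] {m n : ℕ}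
    (M : Matrix (Fin m) (Fin n) ℤ) : Ideal (MvPolynomial (Fin n) K) :=
  Ideal.span (binom K '' kerZ M)

/-- The lattice ideal of a set `L ⊆ ℤˡ`: generated by the binomials
`t^{z₊} - t^{z₋}` for `z ∈ L`. -/
noncomputable def latticeIdeal (K : Type*) [Field K] {l : ℕ}
    (L : Set (Fin l → ℤ)) : Ideal (MvPolynomial (Fin l) K) :=
  Ideal.span (binom K '' L)

/-- The saturation `J : f^∞ = {g | f^k * g ∈ J for some k}`. -/
def satPow {R : Type*} [CommRing R] (J : Ideal R) (f : R) : Ideal R where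
  carrier := {g | ∃ k : ℕ, f ^ k * g ∈ J}
  zero_mem' := ⟨0, by simp⟩
  add_mem' := by
    rintro a b ⟨k, hk⟩ ⟨j, hj⟩
    refine ⟨k + j, ?_⟩
    have : f ^ (k + j) * (a + b) = f ^ j * (f ^ k * a) + f ^ k * (f ^ j * b) := by ring
    rw [this]
    exact add_mem (J.mul_mem_left _ hk) (J.mul_mem_left _ hj)
  smul_mem' := by
    rintro c a ⟨k, hk⟩
    refine ⟨k, ?_⟩
    have : f ^ k * (c • a) = c * (f ^ k * a) := by rw [smul_eq_mul]; ring
    rw [this]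
    exact J.mul_mem_left _ hk

lemma mem_ideal_of_mapDomain_eq_zero {σ R B : Type*} [CommRing R] (I : Ideal (MvPolynomial σ R))
    (f : (σ →₀ ℕ) → B) (hI : ∀ a b (c : R), f a = f b → monomial a c - monomial b c ∈ I)
    {p : MvPolynomial σ R} (hp : AddMonoidAlgebra.mapDomain f p = 0) : p ∈ I := by
  -- `r` picks a representative of each fibre of `f`; `p` minus its image under `r` is a sum of
  -- differences of monomials in a common fibre, and that image vanishes as `r` factors through `f`.
  set r := Function.invFun f ∘ f
  have hr : ∀ a, f a = f (r a) := fun a => (Function.invFun_eq ⟨a, rfl⟩).symm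
  have hq : AddMonoidAlgebra.mapDomainLinearMap R R r p = 0 := by
    rw [AddMonoidAlgebra.mapDomainLinearMap_comp, LinearMap.comp_apply]
    exact (congrArg _ hp).trans (map_zero _)
  have hrp : AddMonoidAlgebra.mapDomainLinearMap R R r p =
      ∑ a ∈ p.support, monomial (r a) (coeff a p) := by
    conv_lhs => rw [p.as_sum]
    simp only [map_sum, ← single_eq_monomial, AddMonoidAlgebra.mapDomainLinearMap_single]
  have hsum : p = ∑ a ∈ p.support, (monomial a (coeff a p) - monomial (r a) (coeff a p)) := by
    rw [Finset.sum_sub_distrib, ← p.as_sum, ← hrp, hq, sub_zero]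
  rw [hsum]
  exact I.sum_mem fun a _ => hI _ _ _ (hr a)

section Binomials

variable (K : Type*) [Field K] {l : ℕ}

lemma monomial_sub_monomial_eq_mul_binom (a b : Fin l →₀ ℕ) (c : K) :
    monomial a c - monomial b c = monomial (a ⊓ b) c * binom K (fun i => (a i : ℤ) - b i) := by
  have hexp : ∀ a b : Fin l →₀ ℕ,
      a ⊓ b + Finsupp.equivFunOnFinite.symm (fun i => ((a i : ℤ) - b i).toNat) = a := by
    intro a b
    ext i
    simp only [Finsupp.add_apply, Finsupp.inf_apply, Finsupp.equivFunOnFinite_symm_apply_apply]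
    omega
  rw [binom, mul_sub, monomial_mul, monomial_mul, mul_one, hexp]
  simp only [neg_sub]
  rw [inf_comm, hexp]

lemma monomial_sub_monomial_mem_latticeIdeal {S : Set (Fin l → ℤ)} {a b : Fin l →₀ ℕ}
    (hab : (fun i => (a i : ℤ) - b i) ∈ S) (c : K) :
    monomial a c - monomial b c ∈ latticeIdeal K S := by
  rw [monomial_sub_monomial_eq_mul_binom]
  exact Ideal.mul_mem_left _ _ (Ideal.subset_span ⟨_, hab, rfl⟩)

end Binomials

lemma mem_satPow_of_dvd {R : Type*} [CommRing R] {J : Ideal R} {f x g : R} {k : ℕ}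
    (hx : x ∣ f ^ k) (hg : x * g ∈ J) : g ∈ satPow J f := by
  obtain ⟨y, hy⟩ := hx
  exact ⟨k, by rw [hy, mul_right_comm]; exact J.mul_mem_right y hg⟩

lemma satPow_le_ker {R S : Type*} [CommRing R] [CommRing S] {φ : R →+* S} {J : Ideal R} {f : R}
    (hf : IsUnit (φ f)) (hJ : J ≤ RingHom.ker φ) : satPow J f ≤ RingHom.ker φ := by
  rintro g ⟨k, hk⟩
  have := hJ hk
  rw [RingHom.mem_ker, map_mul, map_pow] at this
  exact (hf.pow k).mul_right_eq_zero.mp this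

lemma monomial_dvd_prod_X_pow {σ R : Type*} [Fintype σ] [CommSemiring R] (d : σ →₀ ℕ) :
    monomial d (1 : R) ∣ (∏ j, X j) ^ d.degree := by
  classical
  rw [← Finset.prod_pow, monomial_eq, C_1, one_mul, Finsupp.prod_fintype _ _ fun _ => pow_zero _]
  exact Finset.prod_dvd_prod_of_dvd _ _ fun j _ => pow_dvd_pow _ (Finsupp.le_degree j d)

section LatticeQuotient

variable (K : Type*) [Field K] {l : ℕ} (L : AddSubgroup (Fin l → ℤ))

noncomputable def expClass : (Fin l →₀ ℕ) →+ (Fin l → ℤ) ⧸ L :=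
  (QuotientAddGroup.mk' L).comp
    (Finsupp.coeFnAddHom.comp (Finsupp.mapRange.addMonoidHom (Nat.castAddMonoidHom ℤ)))

lemma expClass_eq_iff {a b : Fin l →₀ ℕ} :
    expClass L a = expClass L b ↔ (fun i => (a i : ℤ) - b i) ∈ L :=
  QuotientAddGroup.eq_iff_sub_mem

noncomputable def latticeRingHom :
    MvPolynomial (Fin l) K →+* AddMonoidAlgebra K ((Fin l → ℤ) ⧸ L) :=
  AddMonoidAlgebra.mapDomainRingHom K (expClass L)

lemma latticeRingHom_monomial (d : Fin l →₀ ℕ) (c : K) :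
    latticeRingHom K L (monomial d c) = AddMonoidAlgebra.single (expClass L d) c := by
  rw [← single_eq_monomial, latticeRingHom, AddMonoidAlgebra.mapDomainRingHom_apply,
    AddMonoidAlgebra.mapDomain_single]

lemma isUnit_latticeRingHom_prod_X : IsUnit (latticeRingHom K L (∏ j, X j)) := by
  rw [map_prod]
  refine IsUnit.prod_univ_iff.mpr fun j => ?_
  rw [X, latticeRingHom_monomial]
  exact (Group.isUnit (Multiplicative.ofAdd _)).map (AddMonoidAlgebra.of K _)

lemma latticeIdeal_eq_ker :
    latticeIdeal K (L : Set (Fin l → ℤ)) = RingHom.ker (latticeRingHom K L) := by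
  refine le_antisymm ?_ fun p hp => mem_ideal_of_mapDomain_eq_zero _ (expClass L)
    (fun a b c hab => monomial_sub_monomial_mem_latticeIdeal K ((expClass_eq_iff L).mp hab) c) hp
  rw [latticeIdeal, Ideal.span_le]
  rintro _ ⟨z, hz, rfl⟩
  rw [SetLike.mem_coe, RingHom.mem_ker, binom, map_sub, latticeRingHom_monomial,
    latticeRingHom_monomial, sub_eq_zero]
  congr 1
  rw [expClass_eq_iff]
  simp only [Finsupp.equivFunOnFinite_symm_apply_apply, Int.toNat_sub_toNat_neg]
  exact hz

end LatticeQuotient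

section MonomialMap

variable (K : Type*) [Field K] {l n : ℕ} (N : Matrix (Fin l) (Fin n) ℕ)

lemma aeval_prod_X_pow_monomial (d : Fin n →₀ ℕ) (c : K) :
    aeval (fun i => ∏ j, X j ^ N j i) (monomial d c : MvPolynomial (Fin n) K) =
      monomial (Finsupp.equivFunOnFinite.symm (N.mulVec ⇑d)) c := by
  rw [aeval_monomial, algebraMap_eq, monomial_eq, Finsupp.prod_fintype _ _ fun _ => pow_zero _,
    Finsupp.prod_fintype _ _ fun _ => pow_zero _]
  congr 1
  simp only [Finsupp.equivFunOnFinite_symm_apply_apply, Matrix.mulVec, dotProduct,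
    ← Finset.prod_pow, ← pow_mul]
  rw [Finset.prod_comm]
  simp only [Finset.prod_pow_eq_pow_sum]

lemma aeval_binom_eq_monomial_mul_binom (u : Fin n → ℤ) :
    ∃ d, aeval (fun i => ∏ j, X j ^ N j i) (binom K u) =
      monomial d 1 * binom K ((N.map (Nat.cast : ℕ → ℤ)).mulVec u) := by
  rw [binom, map_sub, aeval_prod_X_pow_monomial, aeval_prod_X_pow_monomial,
    monomial_sub_monomial_eq_mul_binom]
  refine ⟨_, congrArg (monomial _ 1 * binom K ·) (funext fun j => ?_)⟩
  simp only [Finsupp.equivFunOnFinite_symm_apply_apply, Matrix.mulVec, dotProduct,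
    Matrix.map_apply]
  push_cast
  rw [← Finset.sum_sub_distrib]
  simp only [← mul_sub, Int.toNat_sub_toNat_neg]

end MonomialMap

theorem stmt4_general (K : Type*) [Field K] {l m n : ℕ}
    (N : Matrix (Fin l) (Fin n) ℕ) (M : Matrix (Fin m) (Fin n) ℤ)
    (φ : MvPolynomial (Fin n) K →ₐ[K] MvPolynomial (Fin l) K)
    (hφ : φ = aeval fun i : Fin n => ∏ j : Fin l, X j ^ N j i) :
    latticeIdeal K
        {y : Fin l → ℤ | ∃ u ∈ kerZ M, y = (N.map (Nat.cast : ℕ → ℤ)).mulVec u} =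
      satPow (Ideal.map φ (toricIdeal K M)) (∏ j : Fin l, X j) := by
  set L : AddSubgroup (Fin l → ℤ) :=
    ((LinearMap.ker M.mulVecLin).map (N.map (Nat.cast : ℕ → ℤ)).mulVecLin).toAddSubgroup
  have hL : {y : Fin l → ℤ | ∃ u ∈ kerZ M, y = (N.map (Nat.cast : ℕ → ℤ)).mulVec u} = L := by
    ext y
    exact exists_congr fun u => and_congr Iff.rfl eq_comm
  have hφ_binom := hφ ▸ aeval_binom_eq_monomial_mul_binom K N
  rw [hL]
  apply le_antisymm
  · rw [latticeIdeal, Ideal.span_le]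
    rintro _ ⟨_, ⟨u, hu, rfl⟩, rfl⟩
    obtain ⟨d, hd⟩ := hφ_binom u
    refine mem_satPow_of_dvd (monomial_dvd_prod_X_pow d) ?_
    exact hd ▸ Ideal.mem_map_of_mem φ (Ideal.subset_span ⟨u, hu, rfl⟩)
  · rw [latticeIdeal_eq_ker]
    refine satPow_le_ker (isUnit_latticeRingHom_prod_X K L) ?_
    rw [← latticeIdeal_eq_ker, Ideal.map_le_iff_le_comap, toricIdeal, Ideal.span_le]
    rintro _ ⟨u, hu, rfl⟩
    obtain ⟨d, hd⟩ := hφ_binom u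
    rw [SetLike.mem_coe, Ideal.mem_comap, hd]
    exact Ideal.mul_mem_left _ _ (Ideal.subset_span ⟨_, ⟨u, hu, rfl⟩, rfl⟩)

theorem stmt4 (K : Type*) [Field K] {l m n : ℕ}
    (N : Matrix (Fin l) (Fin n) ℕ) (M : Matrix (Fin m) (Fin n) ℤ)
    (h : kerZ (N.map (Nat.cast : ℕ → ℤ)) ⊆ kerZ M)
    (φ : MvPolynomial (Fin n) K →ₐ[K] MvPolynomial (Fin l) K)
    (hφ : φ = aeval fun i : Fin n => ∏ j : Fin l, X j ^ N j i) :
    latticeIdeal K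
        {y : Fin l → ℤ | ∃ u ∈ kerZ M, y = (N.map (Nat.cast : ℕ → ℤ)).mulVec u} =
      satPow (Ideal.map φ (toricIdeal K M)) (∏ j : Fin l, X j) :=
  stmt4_general K N M φ hφ
end

section
/- In the ring K[t_1, t_2] over a field K of characteristic 0, let a ≥ 7 be an odd integer, let ψ: K[x_1,x_2,x_3,x_4] → K[t_1,t_2] be given by ψ(x_1)=t_1^2 t_2^2, ψ(x_2)=t_1^3 t_2^3, ψ(x_3)=t_1^{a+1}, ψ(x_4)=t_2^{a+1}, and write a = 2μ + 3ν with μ ≥ 0, ν ≥ 1 integers; then (t_1^{a+2} − t_2^a)^{a+1} = ψ(f), where f = Σ_{0 ≤ i ≤ (a+1)/2} (−1)^i C(a+1,i) x_1^{iμ} x_2^{iν} x_3^{a+2−2i} + Σ_{(a+1)/2 < i ≤ a+1} (−1)^i C(a+1,i) x_1^{(a+1−i)(μ+1)} x_2^{ν(a+1−i)} x_4^{2i−a−2}. -/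
open MvPolynomial

theorem stmt9 (K : Type*) [Field K] [CharZero K] (a μ ν : ℕ)
    (ha7 : 7 ≤ a) (haodd : Odd a) (hν : 1 ≤ ν) (haμν : a = 2 * μ + 3 * ν)
    (ψ : MvPolynomial (Fin 4) K →ₐ[K] MvPolynomial (Fin 2) K)
    (hψ : ψ = aeval
      ![X 0 ^ 2 * X 1 ^ 2, X 0 ^ 3 * X 1 ^ 3, X 0 ^ (a + 1), X 1 ^ (a + 1)])
    (f : MvPolynomial (Fin 4) K)
    (hf : f =
      (∑ i ∈ Finset.range ((a + 1) / 2 + 1),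
        C ((-1 : K) ^ i * ((a + 1).choose i : K)) *
          (X 0 ^ (i * μ) * X 1 ^ (i * ν) * X 2 ^ (a + 2 - 2 * i))) +
      ∑ i ∈ Finset.Ioc ((a + 1) / 2) (a + 1),
        C ((-1 : K) ^ i * ((a + 1).choose i : K)) *
          (X 0 ^ ((a + 1 - i) * (μ + 1)) * X 1 ^ (ν * (a + 1 - i)) *
            X 3 ^ (2 * i - (a + 2)))) :
    (X 0 ^ (a + 2) - X 1 ^ a : MvPolynomial (Fin 2) K) ^ (a + 1) = ψ f := by
  obtain ⟨k, hk⟩ := haodd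
  subst hψ hf
  rw [map_add, map_sum, map_sum]
  simp only [map_mul, map_pow, aeval_X, aeval_C, algebraMap_eq,
    Matrix.cons_val_zero, Matrix.cons_val_one, Matrix.head_cons,
    Matrix.cons_val_two, Matrix.tail_cons, Matrix.cons_val_three]
  rw [sub_pow, ← Finset.sum_range_reflect]
  have hsplit : Finset.range (a + 1 + 1) =
      Finset.range ((a + 1) / 2 + 1) ∪ Finset.Ioc ((a + 1) / 2) (a + 1) := by
    ext x; simp only [Finset.mem_range, Finset.mem_union, Finset.mem_Ioc]; omega
  rw [hsplit, Finset.sum_union (by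
    simp only [Finset.disjoint_left, Finset.mem_range, Finset.mem_Ioc]
    omega)]
  have haZ : (a : ℤ) = 2 * μ + 3 * ν := by exact_mod_cast haμν
  refine congrArg₂ (· + ·) ?_ ?_
  · apply Finset.sum_congr rfl
    intro i hi
    rw [Finset.mem_range] at hi
    have h1 : i ≤ a + 1 := by omega
    have h2 : 2 * i ≤ a + 2 := by omega
    rw [show a + 1 + 1 - 1 - i = a + 1 - i by omega,
      show a + 1 - (a + 1 - i) = i by omega,
      Nat.choose_symm h1,
      show a + 1 - i + (a + 1) = i + 2 * (a + 1 - i) by omega,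
      pow_add, pow_mul, neg_one_sq, one_pow, mul_one]
    simp only [map_mul, map_pow, map_neg, map_one, map_natCast]
    have e0 : (a + 2) * (a + 1 - i) = 2 * (i * μ) + 3 * (i * ν) + (a + 1) * (a + 2 - 2 * i) := by
      zify [h1, h2]; linear_combination (i : ℤ) * haZ
    have e1 : a * i = 2 * (i * μ) + 3 * (i * ν) := by
      zify; linear_combination (i : ℤ) * haZ
    rw [← pow_mul, ← pow_mul, e0, e1]
    ring_nf
  · apply Finset.sum_congr rfl
    intro i hi
    rw [Finset.mem_Ioc] at hi
    have h1 : i ≤ a + 1 := hi.2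
    have h2 : a + 2 ≤ 2 * i := by omega
    rw [show a + 1 + 1 - 1 - i = a + 1 - i by omega,
      show a + 1 - (a + 1 - i) = i by omega,
      Nat.choose_symm h1,
      show a + 1 - i + (a + 1) = i + 2 * (a + 1 - i) by omega,
      pow_add, pow_mul, neg_one_sq, one_pow, mul_one]
    simp only [map_mul, map_pow, map_neg, map_one, map_natCast]
    have e0 : (a + 2) * (a + 1 - i) = 2 * ((a + 1 - i) * (μ + 1)) + 3 * (ν * (a + 1 - i)) := by
      zify [h1]; linear_combination ((a : ℤ) + 1 - i) * haZ
    have e1 : a * i = 2 * ((a + 1 - i) * (μ + 1)) + 3 * (ν * (a + 1 - i))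
        + (a + 1) * (2 * i - (a + 2)) := by
      zify [h1, h2]; linear_combination ((a : ℤ) + 1 - i) * haZ
    rw [← pow_mul, ← pow_mul, e0, e1]
    ring_nf
end

section
/- Let a be a positive integer with a ≡ 1 (mod 2), and consider the 1×4 matrix M_a = (4, 6, a, a+2) and the 2×4 matrix N_a = [[2,3,(a+1),0],[2,3,0,(a+1)]] (scaled: columns (2,2),(3,3),(a+1,0),(0,a+1)). Then for every u = (u_1,u_2,u_3,u_4) ∈ Z^4 with 4u_1 + 6u_2 + a u_3 + (a+2) u_4 = 0, the vector N_a u := u_1(2,2) + u_2(3,3) + u_3(a+1,0) + u_4(0,a+1) is an integer multiple of (a+2, −a), and conversely (a+2,−a) is attained; i.e., the image lattice N_a(ker_Z(M_a)) equals the lattice generated by (a+2, −a). -/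
theorem stmt12 (a : ℤ) (ha : 0 < a) (haodd : Odd a) :
    {y : Fin 2 → ℤ | ∃ u : Fin 4 → ℤ,
        4 * u 0 + 6 * u 1 + a * u 2 + (a + 2) * u 3 = 0 ∧
        y = u 0 • ![(2 : ℤ), 2] + u 1 • ![(3 : ℤ), 3] +
            u 2 • ![a + 1, 0] + u 3 • ![0, a + 1]} =
      {y : Fin 2 → ℤ | ∃ k : ℤ, y = k • ![a + 2, -a]} := by
  obtain ⟨m, hm⟩ := haodd
  subst hm
  ext y
  simp only [Set.mem_setOf_eq]
  constructor
  · rintro ⟨u, hu, rfl⟩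
    refine ⟨-2 * u 0 - 3 * u 1 - 2 * u 3 - m * (u 2 + u 3), ?_⟩
    funext i
    fin_cases i
    · simp only [Pi.add_apply, Pi.smul_apply, smul_eq_mul, Fin.zero_eta, Fin.mk_one,
        Matrix.cons_val_zero, Matrix.cons_val_one, Matrix.head_cons]
      linear_combination (m + 2) * hu
    · simp only [Pi.add_apply, Pi.smul_apply, smul_eq_mul, Fin.zero_eta, Fin.mk_one,
        Matrix.cons_val_zero, Matrix.cons_val_one, Matrix.head_cons]
      linear_combination (-m) * hu
  · rintro ⟨k, rfl⟩
    refine ⟨![-k, k, k, -k], by simp; ring, ?_⟩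
    funext i
    fin_cases i <;>
      simp [Fin.zero_eta, Fin.mk_one] <;> ring
end

section
/- Let a ≥ 7 be odd, M_a = (4, 6, a, a+2), and D_a the 2×4 matrix with columns (a−2,0), (a−4,2), (2,a−4), (0,a−2). Then the image lattice D_a(ker_Z(M_a)) = {u_1(a−2,0) + u_2(a−4,2) + u_3(2,a−4) + u_4(0,a−2) : 4u_1 + 6u_2 + a u_3 + (a+2)u_4 = 0} equals the lattice generated by (a+2, −4). -/
theorem stmt13 (a : ℤ) (ha : 7 ≤ a) (haodd : Odd a) :
    {y : Fin 2 → ℤ | ∃ u : Fin 4 → ℤ,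
        4 * u 0 + 6 * u 1 + a * u 2 + (a + 2) * u 3 = 0 ∧
        y = u 0 • ![a - 2, 0] + u 1 • ![a - 4, 2] +
            u 2 • ![(2 : ℤ), a - 4] + u 3 • ![(0 : ℤ), a - 2]} =
      {y : Fin 2 → ℤ | ∃ k : ℤ, y = k • ![a + 2, -4]} := by
  ext y
  constructor
  · rintro ⟨u, hc, rfl⟩
    exact ⟨u 0 + u 1 + u 2 + u 3, by
      funext i
      fin_cases i <;> simp [Matrix.cons_val_zero, Matrix.cons_val_one] <;> ring_nf <;> linarith⟩
  · rintro ⟨k, rfl⟩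
    refine ⟨![3 * k, -2 * k, 0, 0], by simp; ring, ?_⟩
    funext i
    fin_cases i <;> simp <;> ring
end

section
/- Let K be a field, a, b positive integers with a > 1 odd, write a = 2μ + 3ν with μ ≥ 0 and ν ≥ 1 integers. Let φ: K[x_1,x_2,x_3,x_4] → K[t_1,t_2] send x_1 ↦ t_1^5, x_2 ↦ t_1 t_2^2, x_3 ↦ t_1^4 t_2^3, x_4 ↦ t_2^5. Then for f = x_1^{4μ+6ν+5b} − 5x_1^{3μ+4ν+4b}x_2^{μ}x_3^{ν} + 10x_1^{2μ+2ν+3b}x_2^{2μ}x_3^{2ν} − 10x_1^{μ+2b}x_2^{3μ}x_3^{3ν} + 5x_1^{ν+b}x_2^{ν}x_3^{μ}x_4^{μ+2ν} − x_4^{2μ+3ν}, one has φ(f) = (t_1^{2a+5b} − t_2^{a})^5. -/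
open MvPolynomial

theorem stmt15 (K : Type*) [Field K] (a b μ ν : ℕ)
    (ha1 : 1 < a) (haodd : Odd a) (hb : 1 ≤ b) (hν : 1 ≤ ν) (haμν : a = 2 * μ + 3 * ν)
    (φ : MvPolynomial (Fin 4) K →ₐ[K] MvPolynomial (Fin 2) K)
    (hφ : φ = aeval ![X 0 ^ 5, X 0 * X 1 ^ 2, X 0 ^ 4 * X 1 ^ 3, X 1 ^ 5]) :
    φ (X 0 ^ (4 * μ + 6 * ν + 5 * b) -
        5 * X 0 ^ (3 * μ + 4 * ν + 4 * b) * X 1 ^ μ * X 2 ^ ν +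
        10 * X 0 ^ (2 * μ + 2 * ν + 3 * b) * X 1 ^ (2 * μ) * X 2 ^ (2 * ν) -
        10 * X 0 ^ (μ + 2 * b) * X 1 ^ (3 * μ) * X 2 ^ (3 * ν) +
        5 * X 0 ^ (ν + b) * X 1 ^ ν * X 2 ^ μ * X 3 ^ (μ + 2 * ν) -
        X 3 ^ (2 * μ + 3 * ν)) =
      (X 0 ^ (2 * a + 5 * b) - X 1 ^ a : MvPolynomial (Fin 2) K) ^ 5 := by

  subst hφ haμν
  simp only [map_sub, map_add, map_mul, map_pow, map_ofNat, aeval_X,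
    Matrix.cons_val_zero, Matrix.cons_val_one, Matrix.head_cons,
    Matrix.cons_val_two, Matrix.tail_cons, Matrix.cons_val_three,
    Matrix.head_fin_const]
  ring
end

section
/- Let K be a field and I ⊆ K[t_1,...,t_l] any ideal. Then rad(I) = rad(I : (t_1⋯t_l)^∞) ∩ rad(I, t_1) ∩ ... ∩ rad(I, t_l), where (I, t_i) denotes the ideal generated by I and t_i. -/
/-! Every prime `P ⊇ I` either contains `∏ fᵢ`, hence some `fᵢ` and so `(I, fᵢ)`, or misses
`∏ fᵢ`, hence contains `I : (∏ fᵢ)^∞`. Intersecting over all such `P` gives `rad I` on the left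
and contains the right-hand side. -/

open MvPolynomial

section

variable {R : Type*} [CommRing R]

theorem le_satPow (J : Ideal R) (f : R) : J ≤ satPow J f :=
  fun g hg => ⟨0, by simpa using hg⟩

theorem Ideal.IsPrime.satPow_le {J P : Ideal R} (hP : P.IsPrime) (hJP : J ≤ P) {f : R}
    (hf : f ∉ P) : satPow J f ≤ P := by
  rintro g ⟨k, hk⟩
  exact (hP.mem_or_mem (hJP hk)).resolve_left fun h => hf (hP.mem_of_pow_mem k h)

theorem Ideal.radical_eq_radical_satPow_prod_inf_iInf_radical_sup_span {ι : Type*} [Fintype ι]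
    (I : Ideal R) (f : ι → R) :
    I.radical = (satPow I (∏ i, f i)).radical ⊓ ⨅ i, (I ⊔ Ideal.span {f i}).radical := by
  refine le_antisymm
    (le_inf (Ideal.radical_mono (le_satPow I _)) (le_iInf fun i => Ideal.radical_mono le_sup_left))
    ?_
  rw [Ideal.radical_eq_sInf I]
  refine le_sInf fun P ⟨hIP, hP⟩ => ?_
  by_cases hprod : ∏ i, f i ∈ P
  · obtain ⟨i, -, hi⟩ := hP.prod_mem_iff.mp hprod
    have hsup : I ⊔ Ideal.span {f i} ≤ P :=
      sup_le hIP ((Ideal.span_singleton_le_iff_mem P).mpr hi)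
    exact inf_le_right.trans <| (iInf_le _ i).trans (hP.radical_le_iff.mpr hsup)
  · exact inf_le_left.trans (hP.radical_le_iff.mpr (hP.satPow_le hIP hprod))

end

theorem stmt17 (K : Type*) [Field K] {l : ℕ} (I : Ideal (MvPolynomial (Fin l) K)) :
    I.radical =
      (satPow I (∏ i : Fin l, X i)).radical ⊓
        ⨅ i : Fin l, (I ⊔ Ideal.span {X i}).radical :=
  I.radical_eq_radical_satPow_prod_inf_iInf_radical_sup_span fun i => X i
end

section
/- Let N be an l×n integer matrix with non-negative entries and M an m×n integer matrix with ker_Z(N) ⊆ ker_Z(M). Let φ: K[x_1,...,x_n] → K[t_1,...,t_l] be the monomial map with kernel I_N, and suppose f_1,...,f_s ∈ I_M satisfy rad(φ(I_M)K[t]) = rad(φ(f_1),...,φ(f_s)). If additionally the toric set Γ(N) equals V(I_N) over the algebraic closure of K, then I_M = rad(I_N + (f_1,...,f_s)). -/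
open MvPolynomial

/-!
`I_M` is the kernel of the monomial map `x_i ↦ t^{M e_i}` into the Laurent polynomial ring
`K[t₁^±, …, t_m^±]`, a domain, so `I_M` is prime. As `I_N ≤ I_M` and every `f_i ∈ I_M`, this gives
`rad (I_N + (f)) ≤ I_M`. Conversely, by the Nullstellensatz over `K̄` it suffices that each
`g ∈ I_M` vanishes on `V(I_N + (f))`. A point of `V(I_N) = Γ(N)` has the form `T^N`, where
evaluation factors as `q ↦ (φ q)(T)`; every `φ f_i` vanishes at `T`, hence so does every element
of `rad (φ f_1, …, φ f_s) = rad (φ I_M)`, in particular `φ g`.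
-/

section ToricIdeal

variable (K : Type*) [Field K] {m n : ℕ} (M : Matrix (Fin m) (Fin n) ℤ)

def toricWeight : (Fin n →₀ ℕ) →+ (Fin m → ℤ) where
  toFun d := M.mulVec fun i => (d i : ℤ)
  map_zero' := M.mulVec_zero
  map_add' d e := by simp [← Matrix.mulVec_add]; rfl

/-- `AddMonoidAlgebra K (Fin m → ℤ)` is the Laurent polynomial ring in `m` variables. -/
noncomputable def toricHom : MvPolynomial (Fin n) K →ₐ[K] AddMonoidAlgebra K (Fin m → ℤ) :=
  AddMonoidAlgebra.mapDomainAlgHom K K (toricWeight M)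

variable {K M}

@[simp]
lemma toricHom_monomial (d : Fin n →₀ ℕ) (c : K) :
    toricHom K M (monomial d c) = AddMonoidAlgebra.single (toricWeight M d) c := by
  simp [toricHom, monomial]

lemma toricWeight_sub_toricWeight (d e : Fin n →₀ ℕ) :
    toricWeight M d - toricWeight M e = M.mulVec fun i => (d i : ℤ) - e i := by
  simp [toricWeight, ← Matrix.mulVec_sub]
  rfl

lemma binom_mem_ker_toricHom {u : Fin n → ℤ} (hu : u ∈ kerZ M) :
    binom K u ∈ RingHom.ker (toricHom K M) := by
  have hweight : toricWeight M (Finsupp.equivFunOnFinite.symm fun i => (u i).toNat) =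
      toricWeight M (Finsupp.equivFunOnFinite.symm fun i => (-u i).toNat) := by
    rw [← sub_eq_zero, toricWeight_sub_toricWeight]
    simp only [Finsupp.coe_equivFunOnFinite_symm, Int.toNat_sub_toNat_neg]
    exact hu
  simp [binom, hweight]

lemma monomial_sub_monomial_mem_toricIdeal {d e : Fin n →₀ ℕ}
    (h : toricWeight M d = toricWeight M e) :
    monomial d (1 : K) - monomial e 1 ∈ toricIdeal K M := by
  set u : Fin n → ℤ := fun i => (d i : ℤ) - e i
  have hu : u ∈ kerZ M := by
    show M.mulVec u = 0
    rw [← toricWeight_sub_toricWeight, h, sub_self]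
  have hfactor : monomial (d ⊓ e) 1 * binom K u = monomial d (1 : K) - monomial e 1 := by
    rw [binom, mul_sub, monomial_mul, monomial_mul, mul_one]
    congr 3 <;> ext i <;> simp [u] <;> omega
  rw [← hfactor]
  exact Ideal.mul_mem_left _ _ (Ideal.subset_span ⟨u, hu, rfl⟩)

/-- A monomial of weight `w` is congruent modulo the toric ideal to a fixed representative of
that weight, so sending `w` to this representative retracts `toricHom` onto the quotient. -/
lemma ker_toricHom_le_toricIdeal : RingHom.ker (toricHom K M) ≤ toricIdeal K M := by
  let Q := MvPolynomial (Fin n) K ⧸ toricIdeal K M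
  let ρ : AddMonoidAlgebra K (Fin m → ℤ) →ₗ[K] Q :=
    (AddMonoidAlgebra.basis (Fin m → ℤ) K).constr K fun w =>
      Ideal.Quotient.mkₐ K _ (monomial (Function.invFun (toricWeight M) w) 1)
  have hρ : ∀ p, ρ (toricHom K M p) = Ideal.Quotient.mkₐ K _ p := by
    intro p
    induction p using MvPolynomial.induction_on' with
    | monomial d c =>
      have hrep : Ideal.Quotient.mkₐ K (toricIdeal K M)
          (monomial (Function.invFun (toricWeight M) (toricWeight M d)) 1) =
          Ideal.Quotient.mkₐ K _ (monomial d 1) :=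
        Ideal.Quotient.eq.mpr
          (monomial_sub_monomial_mem_toricIdeal (Function.invFun_eq ⟨d, rfl⟩))
      calc ρ (toricHom K M (monomial d c))
          = c • ρ (AddMonoidAlgebra.basis (Fin m → ℤ) K (toricWeight M d)) := by
            rw [toricHom_monomial, AddMonoidAlgebra.basis_apply, ← map_smul,
              AddMonoidAlgebra.smul_single, smul_eq_mul, mul_one]
        _ = Ideal.Quotient.mkₐ K _ (c • monomial d 1) := by
            rw [Module.Basis.constr_basis, hrep, map_smul]
        _ = Ideal.Quotient.mkₐ K _ (monomial d c) := by
            rw [smul_monomial, smul_eq_mul, mul_one]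
    | add p q hp hq => rw [map_add, map_add, hp, hq, map_add]
  intro g hg
  rw [← Ideal.Quotient.eq_zero_iff_mem, ← Ideal.Quotient.mkₐ_eq_mk K, ← hρ,
    RingHom.mem_ker.mp hg, map_zero]

lemma toricIdeal_eq_ker_toricHom : toricIdeal K M = RingHom.ker (toricHom K M) :=
  le_antisymm (Ideal.span_le.mpr <| by rintro _ ⟨u, hu, rfl⟩; exact binom_mem_ker_toricHom hu)
    ker_toricHom_le_toricIdeal

lemma isPrime_toricIdeal : (toricIdeal K M).IsPrime := by
  have : IsDomain (AddMonoidAlgebra K (Fin m → ℤ)) := NoZeroDivisors.to_isDomain _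
  rw [toricIdeal_eq_ker_toricHom]
  exact RingHom.ker_isPrime _

lemma toricIdeal_mono {k : ℕ} {N : Matrix (Fin k) (Fin n) ℤ} (h : kerZ N ⊆ kerZ M) :
    toricIdeal K N ≤ toricIdeal K M :=
  Ideal.span_mono (Set.image_mono h)

end ToricIdeal

theorem stmt18_general (K : Type*) [Field K] {l m n s : ℕ}
    (N : Matrix (Fin l) (Fin n) ℕ) (M : Matrix (Fin m) (Fin n) ℤ)
    (h : kerZ (N.map (Nat.cast : ℕ → ℤ)) ⊆ kerZ M)
    (φ : MvPolynomial (Fin n) K →ₐ[K] MvPolynomial (Fin l) K)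
    (hφ : φ = aeval fun i : Fin n => ∏ j : Fin l, X j ^ N j i)
    (f : Fin s → MvPolynomial (Fin n) K)
    (hf : ∀ i, f i ∈ toricIdeal K M)
    (hrad : (Ideal.map φ (toricIdeal K M)).radical =
      (Ideal.span (Set.range fun i => φ (f i))).radical)
    (hΓ : {x : Fin n → AlgebraicClosure K |
            ∃ T : Fin l → AlgebraicClosure K, ∀ i, x i = ∏ j, T j ^ N j i} =
          {x : Fin n → AlgebraicClosure K |
            ∀ g ∈ toricIdeal K (N.map (Nat.cast : ℕ → ℤ)), aeval x g = 0}) :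
    toricIdeal K M =
      (toricIdeal K (N.map (Nat.cast : ℕ → ℤ)) ⊔ Ideal.span (Set.range f)).radical := by
  refine le_antisymm ?_ ?_
  · rw [← vanishingIdeal_zeroLocus_eq_radical (K := AlgebraicClosure K)]
    intro g hg x hx
    obtain ⟨T, hT⟩ := (Set.ext_iff.mp hΓ x).mpr fun p hp => hx p (Ideal.mem_sup_left hp)
    have hcomp : ∀ q, aeval T (φ q) = aeval x q := fun q => by
      rw [hφ, ← AlgHom.comp_apply, comp_aeval, funext hT]
      simp
    have hspan : Ideal.span (Set.range fun i => φ (f i)) ≤ RingHom.ker (aeval T) :=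
      Ideal.span_le.mpr <| Set.range_subset_iff.mpr fun i =>
        (hcomp _).trans (hx _ (Ideal.mem_sup_right (Ideal.subset_span ⟨i, rfl⟩)))
    rw [← hcomp]
    exact (RingHom.ker_isPrime _).radical_le_iff.mpr hspan
      (hrad ▸ Ideal.le_radical (Ideal.mem_map_of_mem φ hg))
  · exact isPrime_toricIdeal.radical_le_iff.mpr
      (sup_le (toricIdeal_mono h) (Ideal.span_le.mpr (Set.range_subset_iff.mpr hf)))

theorem stmt18 (K : Type*) [Field K] {l m n s : ℕ}
    (N : Matrix (Fin l) (Fin n) ℕ) (M : Matrix (Fin m) (Fin n) ℤ)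
    (h : kerZ (N.map (Nat.cast : ℕ → ℤ)) ⊆ kerZ M)
    (φ : MvPolynomial (Fin n) K →ₐ[K] MvPolynomial (Fin l) K)
    (hφ : φ = aeval fun i : Fin n => ∏ j : Fin l, X j ^ N j i)
    (hker : RingHom.ker φ = toricIdeal K (N.map (Nat.cast : ℕ → ℤ)))
    (f : Fin s → MvPolynomial (Fin n) K)
    (hf : ∀ i, f i ∈ toricIdeal K M)
    (hrad : (Ideal.map φ (toricIdeal K M)).radical =
      (Ideal.span (Set.range fun i => φ (f i))).radical)
    (hΓ : {x : Fin n → AlgebraicClosure K |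
            ∃ T : Fin l → AlgebraicClosure K, ∀ i, x i = ∏ j, T j ^ N j i} =
          {x : Fin n → AlgebraicClosure K |
            ∀ g ∈ toricIdeal K (N.map (Nat.cast : ℕ → ℤ)), aeval x g = 0}) :
    toricIdeal K M =
      (toricIdeal K (N.map (Nat.cast : ℕ → ℤ)) ⊔ Ideal.span (Set.range f)).radical :=
  stmt18_general K N M h φ hφ f hf hrad hΓ
end

section
/- Let N be an l×n integer matrix with non-negative entries and M an m×n integer matrix with ker_Z(N) ⊆ ker_Z(M), and let φ be the monomial map with kernel I_N. If f_1,...,f_s ∈ I_M satisfy I_M = rad(I_N + (f_1,...,f_s)), then rad(φ(I_M)K[t_1,...,t_l]) = rad(φ(f_1),...,φ(f_s)). -/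
open MvPolynomial

theorem stmt19 (K : Type*) [Field K] {l m n s : ℕ}
    (N : Matrix (Fin l) (Fin n) ℕ) (M : Matrix (Fin m) (Fin n) ℤ)
    (h : kerZ (N.map (Nat.cast : ℕ → ℤ)) ⊆ kerZ M)
    (φ : MvPolynomial (Fin n) K →ₐ[K] MvPolynomial (Fin l) K)
    (hφ : φ = aeval fun i : Fin n => ∏ j : Fin l, X j ^ N j i)
    (hker : RingHom.ker φ = toricIdeal K (N.map (Nat.cast : ℕ → ℤ)))
    (f : Fin s → MvPolynomial (Fin n) K)
    (hf : ∀ i, f i ∈ toricIdeal K M)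
    (hgen : toricIdeal K M =
      (toricIdeal K (N.map (Nat.cast : ℕ → ℤ)) ⊔ Ideal.span (Set.range f)).radical) :
    (Ideal.map φ (toricIdeal K M)).radical =
      (Ideal.span (Set.range fun i => φ (f i))).radical := by
  have hspan : Ideal.map φ (Ideal.span (Set.range f)) =
      Ideal.span (Set.range fun i => φ (f i)) := by
    rw [Ideal.map_span, ← Set.range_comp]; rfl
  have hbot : Ideal.map φ (toricIdeal K (N.map (Nat.cast : ℕ → ℤ))) = ⊥ := by
    rw [← hker]
    exact le_bot_iff.mp (Ideal.map_le_iff_le_comap.mpr fun x hx => hx)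
  apply le_antisymm
  · rw [Ideal.radical_le_radical_iff]
    calc Ideal.map φ (toricIdeal K M)
        ≤ Ideal.map φ ((toricIdeal K (N.map (Nat.cast : ℕ → ℤ)) ⊔
            Ideal.span (Set.range f)).radical) := by rw [← hgen]
      _ ≤ ((toricIdeal K (N.map (Nat.cast : ℕ → ℤ)) ⊔
            Ideal.span (Set.range f)).map φ).radical := Ideal.map_radical_le φ
      _ = (Ideal.span (Set.range fun i => φ (f i))).radical := by
            rw [Ideal.map_sup, hbot, hspan, bot_sup_eq]
  · apply Ideal.radical_mono
    rw [← hspan]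
    apply Ideal.map_mono
    rw [Ideal.span_le]
    rintro _ ⟨i, rfl⟩
    exact hf i
end
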